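/- Let R be a commutative Noetherian ring of prime characteristic p whose Frobenius endomorphism is finite and flat, and let a be an ideal of R. Then: (1) if α > 0 is an F-jumping exponent of a, then pα is also an F-jumping exponent of a; (2) if a can be generated by m elements and α > m is an F-jumping exponent of a, then α − 1 is also an F-jumping exponent of a. -/

import Mathlib

/-!
Since Frobenius is finite and flat over a Noetherian ring, `R` is a finite projective module
over itself via `F^e`, i.e. it has a finite dual basis. With it, `b ↦ b^{[1/q]}` is left adjoint
to `J ↦ J^{[q]}`, Frobenius is pure (`x^q ∈ J^{[q]}` forces `x ∈ J`), and colon ideals commute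
with bracket powers.

Adjointness gives `τ(a^{pc})^{[1/p]} = τ(a^c)`, so an equality `τ(a^c) = τ(a^{pα})` with
`c < pα` would descend to `τ(a^{c/p}) = τ(a^α)`. For `a` generated by `m` elements, the
pigeonhole inclusion `a^r ⊆ a^{[q]} a^{r-q}` for `r > m(q-1)` yields Skoda's theorem
`τ(a^d) = a τ(a^{d-1})` for `d ≥ m`, which turns an equality `τ(a^c) = τ(a^{α-1})` into
`τ(a^{c+1}) = τ(a^α)`.
-/

open Ideal

/-- The `q`-th bracket power `J^{[q]}` of an ideal: the ideal generated by
the `q`-th powers of the elements of `J`. -/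
def bracketPow {R : Type*} [CommRing R] (J : Ideal R) (q : ℕ) : Ideal R :=
  Ideal.span ((fun x => x ^ q) '' (J : Set R))

/-- The ideal `b^{[1/q]}`: the smallest ideal `J` with `b ⊆ J^{[q]}`
(realized as the intersection of all such ideals). -/
def frobRoot {R : Type*} [CommRing R] (b : Ideal R) (q : ℕ) : Ideal R :=
  sInf {J : Ideal R | b ≤ bracketPow J q}

/-- The generalized test ideal `τ(a^c) = ⋃_{e ≥ 1} (a^{⌈c p^e⌉})^{[1/p^e]}`. -/
noncomputable def testIdeal {R : Type*} [CommRing R] (p : ℕ) (a : Ideal R) (c : ℝ) : Ideal R :=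
  ⨆ e : ℕ, frobRoot (a ^ ⌈c * (p : ℝ) ^ (e + 1)⌉₊) (p ^ (e + 1))

/-- `ν_a^J(q)`: the largest nonnegative integer `r` with `a^r ⊄ J^{[q]}`
(and `0` if there is no such `r`). -/
noncomputable def nuF {R : Type*} [CommRing R] (a J : Ideal R) (q : ℕ) : ℕ :=
  sSup {r : ℕ | ¬ a ^ r ≤ bracketPow J q}

/-- The F-threshold `c^J(a) = sup_{e ≥ 1} ν_a^J(p^e)/p^e`. -/
noncomputable def FThreshold {R : Type*} [CommRing R] (p : ℕ) (a J : Ideal R) : ℝ :=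
  ⨆ e : ℕ, (nuF a J (p ^ (e + 1)) : ℝ) / (p : ℝ) ^ (e + 1)

/-- `α > 0` is an F-jumping exponent of `a` if `τ(a^α) ≠ τ(a^c)` for all `0 ≤ c < α`. -/
def IsFJumpingExponent {R : Type*} [CommRing R] (p : ℕ) (a : Ideal R) (α : ℝ) : Prop :=
  0 < α ∧ ∀ c : ℝ, 0 ≤ c → c < α → testIdeal p a c ≠ testIdeal p a α

/-- Dual-basis data exhibiting `S`, as an `R`-module through `f`, as a direct summand of `R^n`. -/
structure RingHom.FiniteDualBasis {R S : Type*} [CommRing R] [CommRing S] (f : R →+* S) where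
  n : ℕ
  coord : Fin n → S →+ R
  vec : Fin n → S
  coord_map_mul (i : Fin n) (r : R) (z : S) : coord i (f r * z) = r * coord i z
  sum_map_coord_mul (z : S) : ∑ i, f (coord i z) * vec i = z

namespace RingHom.FiniteDualBasis

variable {R S T : Type*} [CommRing R] [CommRing S] [CommRing T]

theorem nonempty_of_finite_of_flat [IsNoetherianRing R] {f : R →+* S} (hfin : f.Finite)
    (hflat : f.Flat) : Nonempty f.FiniteDualBasis := by
  let _ : Algebra R S := f.toAlgebra
  have : Module.Finite R S := hfin
  have : Module.Flat R S := hflat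
  have : Module.FinitePresentation R S := Module.finitePresentation_of_finite R S
  have : Module.Projective R S := Module.Flat.projective_of_finitePresentation
  have hf : algebraMap R S = f := rfl
  obtain ⟨n, π, ι, -, -, hπι⟩ := Module.Finite.exists_comp_eq_id_of_projective R S
  refine ⟨⟨n, fun i => ((LinearMap.proj i).comp ι).toAddMonoidHom,
    fun i => π (Pi.single i 1), fun i r z => ?_, fun z => ?_⟩⟩
  · simpa [Algebra.smul_def, hf] using congrFun (ι.map_smul r z) i
  · calc ∑ i, f (ι z i) * π (Pi.single i 1) = π (∑ i, ι z i • Pi.single i 1) := by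
          simp only [map_sum, LinearMap.map_smul, Algebra.smul_def (A := S), hf]
      _ = π (ι z) := by congr 1; ext j; simp [Pi.single_apply]
      _ = z := LinearMap.congr_fun hπι z

def id : (RingHom.id R).FiniteDualBasis where
  n := 1
  coord _ := AddMonoidHom.id R
  vec _ := 1
  coord_map_mul _ _ _ := rfl
  sum_map_coord_mul _ := by simp

def comp {g : S →+* T} {f : R →+* S} (B : g.FiniteDualBasis) (A : f.FiniteDualBasis) :
    (g.comp f).FiniteDualBasis where
  n := A.n * B.n
  coord k := (A.coord (finProdFinEquiv.symm k).1).comp (B.coord (finProdFinEquiv.symm k).2)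
  vec k := g (A.vec (finProdFinEquiv.symm k).1) * B.vec (finProdFinEquiv.symm k).2
  coord_map_mul k r z := by simp [B.coord_map_mul, A.coord_map_mul]
  sum_map_coord_mul z := by
    rw [← finProdFinEquiv.sum_comp, Fintype.sum_prod_type_right]
    conv_rhs => rw [← B.sum_map_coord_mul z]
    refine Finset.sum_congr rfl fun j _ => ?_
    conv_rhs => rw [← A.sum_map_coord_mul (B.coord j z)]
    simp [map_sum, Finset.sum_mul, mul_assoc, mul_left_comm]

end RingHom.FiniteDualBasis

namespace RingHom.FiniteDualBasis

variable {R S : Type*} [CommRing R] [CommRing S] {f : R →+* S}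

theorem mem_map_iff (B : f.FiniteDualBasis) {J : Ideal R} {z : S} :
    z ∈ J.map f ↔ ∀ i, B.coord i z ∈ J := by
  refine ⟨fun hz i => ?_, fun h => ?_⟩
  · suffices ∀ s, B.coord i (s * z) ∈ J by simpa using this 1
    induction hz using Submodule.span_induction with
    | mem _ hx =>
      obtain ⟨y, hy, rfl⟩ := hx
      intro s
      rw [mul_comm, B.coord_map_mul]
      exact J.mul_mem_right _ hy
    | zero => simp
    | add x y _ _ hx hy =>
      intro s
      rw [mul_add, map_add]
      exact J.add_mem (hx s) (hy s)
    | smul r x _ hx =>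
      intro s
      rw [smul_eq_mul, ← mul_assoc]
      exact hx _
  · rw [← B.sum_map_coord_mul z]
    exact sum_mem fun i _ => mul_mem_right _ _ (mem_map_of_mem f (h i))

theorem le_map_sInf (B : f.FiniteDualBasis) {b : Ideal S} {s : Set (Ideal R)}
    (h : ∀ J ∈ s, b ≤ J.map f) : b ≤ (sInf s).map f := fun _ hz =>
  B.mem_map_iff.2 fun i => Submodule.mem_sInf.2 fun J hJ => B.mem_map_iff.1 (h J hJ hz) i

theorem mem_map_colon_of_map_mul_mem (B : f.FiniteDualBasis) {J : Ideal R} {x : R} {z : S}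
    (h : f x * z ∈ J.map f) : z ∈ (J.colon {x}).map f :=
  B.mem_map_iff.2 fun i => Submodule.mem_colon_singleton.2 <| by
    have := B.mem_map_iff.1 h i
    rwa [B.coord_map_mul, mul_comm] at this

theorem comap_map_eq_self {f : R →+* R} (B : f.FiniteDualBasis)
    (hf : ∀ I : Ideal R, I.map f ≤ I) (J : Ideal R) : (J.map f).comap f = J := by
  refine le_antisymm (fun x hx => ?_) le_comap_map
  -- `1 = ∑ f (coord i 1) * vec i` lies in the extension of the ideal below, which `f` shrinks.
  have hone : span (Set.range fun i => B.coord i 1) = ⊤ := by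
    refine (eq_top_iff_one _).2 (hf _ ?_)
    suffices ∑ i, f (B.coord i 1) * B.vec i ∈ _ by rwa [B.sum_map_coord_mul] at this
    exact sum_mem fun i _ => mul_mem_right _ _ (mem_map_of_mem f (subset_span ⟨i, rfl⟩))
  have hcolon : span (Set.range fun i => B.coord i 1) ≤ J.colon {x} := by
    refine span_le.2 ?_
    rintro _ ⟨i, rfl⟩
    have := B.mem_map_iff.1 (show f x * 1 ∈ J.map f by simpa using hx) i
    rw [B.coord_map_mul] at this
    simpa [Submodule.mem_colon_singleton, mul_comm] using this
  simpa [Submodule.mem_colon_singleton] using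
    hcolon (hone ▸ Submodule.mem_top : (1 : R) ∈ _)

end RingHom.FiniteDualBasis

section FrobeniusRoot

variable {R : Type*} [CommRing R]

theorem bracketPow_mono {I J : Ideal R} (q : ℕ) (h : I ≤ J) :
    bracketPow I q ≤ bracketPow J q :=
  span_mono (Set.image_mono h)

theorem bracketPow_le_pow (I : Ideal R) (q : ℕ) : bracketPow I q ≤ I ^ q :=
  span_le.2 <| by
    rintro _ ⟨x, hx, rfl⟩
    exact pow_mem_pow hx q

theorem frobRoot_mono {b b' : Ideal R} (q : ℕ) (h : b ≤ b') : frobRoot b q ≤ frobRoot b' q :=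
  sInf_le_sInf fun _ hJ => h.trans hJ

theorem frobRoot_bot (q : ℕ) : frobRoot (⊥ : Ideal R) q = ⊥ :=
  le_bot_iff.1 (sInf_le (show ⊥ ≤ bracketPow ⊥ q from bot_le))

variable {p : ℕ} [ExpChar R p]

theorem bracketPow_eq_map (J : Ideal R) (e : ℕ) :
    bracketPow J (p ^ e) = J.map (iterateFrobenius R p e) := by
  rfl

theorem bracketPow_mul (I J : Ideal R) (e : ℕ) :
    bracketPow (I * J) (p ^ e) = bracketPow I (p ^ e) * bracketPow J (p ^ e) := by
  simp only [bracketPow_eq_map, Ideal.map_mul]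

theorem gc_frobRoot_bracketPow {e : ℕ} (B : (iterateFrobenius R p e).FiniteDualBasis) :
    GaloisConnection (fun b : Ideal R => frobRoot b (p ^ e)) (bracketPow · (p ^ e)) := fun _ _ =>
  ⟨fun h => (B.le_map_sInf fun _ hJ => hJ).trans (bracketPow_mono _ h), fun h => sInf_le h⟩

theorem frobRoot_bracketPow {e : ℕ} (B : (iterateFrobenius R p e).FiniteDualBasis)
    (I : Ideal R) : frobRoot (bracketPow I (p ^ e)) (p ^ e) = I := by
  refine le_antisymm ((gc_frobRoot_bracketPow B).l_u_le I) (le_sInf fun J hJ => ?_)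
  have hpure := B.comap_map_eq_self (fun K => (bracketPow_le_pow K _).trans
    (pow_le_self (pow_ne_zero e (expChar_ne_zero R p)))) J
  exact le_comap_map.trans (hpure ▸ comap_mono hJ)

theorem frobRoot_frobRoot (hF : ∀ e, Nonempty (iterateFrobenius R p e).FiniteDualBasis)
    (e e' : ℕ) (b : Ideal R) :
    frobRoot (frobRoot b (p ^ e)) (p ^ e') = frobRoot b (p ^ (e + e')) := by
  obtain ⟨B⟩ := hF e
  obtain ⟨B'⟩ := hF e'
  obtain ⟨B''⟩ := hF (e + e')
  refine ((gc_frobRoot_bracketPow B).compose (gc_frobRoot_bracketPow B')).l_unique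
    (gc_frobRoot_bracketPow B'') fun J => ?_
  simp only [Function.comp_apply, bracketPow_eq_map, Ideal.map_map, iterateFrobenius_add]

end FrobeniusRoot

section TestIdeal

variable {R : Type*} [CommRing R] {p : ℕ}

theorem testIdeal_antitone (a : Ideal R) : Antitone (testIdeal p a) := fun _ _ h =>
  iSup_mono fun _ => frobRoot_mono _ <| pow_le_pow_right <| Nat.ceil_mono <| by gcongr

variable [ExpChar R p]

theorem monotone_frobRoot_pow_ceil
    (hF : ∀ e, Nonempty (iterateFrobenius R p e).FiniteDualBasis) (a : Ideal R) (c : ℝ) :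
    Monotone fun e => frobRoot (a ^ ⌈c * (p : ℝ) ^ e⌉₊) (p ^ e) := by
  refine monotone_nat_of_le_succ fun e => ?_
  obtain ⟨B⟩ := hF 1
  set r := ⌈c * (p : ℝ) ^ e⌉₊
  have hceil : ⌈c * (p : ℝ) ^ (e + 1)⌉₊ ≤ r * p ^ 1 := by
    refine Nat.ceil_le.2 ?_
    rw [pow_one, pow_succ, ← mul_assoc]
    push_cast
    gcongr
    exact Nat.le_ceil _
  have hbracket : bracketPow (a ^ r) (p ^ 1) ≤ a ^ ⌈c * (p : ℝ) ^ (e + 1)⌉₊ :=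
    (bracketPow_le_pow _ _).trans (pow_mul a r _ ▸ pow_le_pow_right hceil)
  calc frobRoot (a ^ r) (p ^ e)
      = frobRoot (frobRoot (bracketPow (a ^ r) (p ^ 1)) (p ^ 1)) (p ^ e) := by
        rw [frobRoot_bracketPow B]
    _ ≤ frobRoot (frobRoot (a ^ ⌈c * (p : ℝ) ^ (e + 1)⌉₊) (p ^ 1)) (p ^ e) :=
        frobRoot_mono _ (frobRoot_mono _ hbracket)
    _ = frobRoot (a ^ ⌈c * (p : ℝ) ^ (e + 1)⌉₊) (p ^ (e + 1)) := by
        rw [frobRoot_frobRoot hF, add_comm]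

theorem testIdeal_eq_iSup
    (hF : ∀ e, Nonempty (iterateFrobenius R p e).FiniteDualBasis) (a : Ideal R) (c : ℝ) :
    testIdeal p a c = ⨆ e, frobRoot (a ^ ⌈c * (p : ℝ) ^ e⌉₊) (p ^ e) :=
  (monotone_frobRoot_pow_ceil hF a c).iSup_nat_add 1

theorem frobRoot_testIdeal_natCast_mul
    (hF : ∀ e, Nonempty (iterateFrobenius R p e).FiniteDualBasis) (a : Ideal R) (c : ℝ) :
    frobRoot (testIdeal p a (p * c)) (p ^ 1) = testIdeal p a c := by
  obtain ⟨B⟩ := hF 1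
  rw [testIdeal_eq_iSup hF, (gc_frobRoot_bracketPow B).l_iSup]
  refine iSup_congr fun e => ?_
  rw [frobRoot_frobRoot hF]
  ring_nf

end TestIdeal

theorem Ideal.span_pow_le_span_image_pow_mul {R : Type*} [CommSemiring R] (s : Finset R)
    (q : ℕ) {r : ℕ} (hr : s.card * (q - 1) < r) :
    span (s : Set R) ^ r ≤ span ((· ^ q) '' s) * span (s : Set R) ^ (r - q) := by
  classical
  induction s using Finset.induction_on generalizing r with
  | empty =>
    simp only [Finset.coe_empty, span_empty, ← zero_eq_bot, zero_pow (by omega : r ≠ 0)]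
    exact bot_le
  | @insert x s hx ih =>
    rw [Finset.card_insert_of_notMem hx, Nat.succ_mul] at hr
    rw [Finset.coe_insert, span_insert, ← add_eq_sup]
    set I := span {x}
    set J := span (s : Set R)
    set T := span ((· ^ q) '' insert x (s : Set R))
    have hxT : span {x ^ q} ≤ T := span_mono (by simp)
    have hsT : span ((· ^ q) '' ↑s) ≤ T := span_mono (Set.image_mono (Set.subset_insert _ _))
    have hI : I ≤ I + J := le_sup_left
    have hJ : J ≤ I + J := le_sup_right
    rw [add_pow, sum_eq_sup]
    refine Finset.sup_le fun j hj => mul_le_left.trans ?_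
    have hjr := Finset.mem_range_succ_iff.1 hj
    by_cases hqj : q ≤ j
    · calc I ^ j * J ^ (r - j)
          = span {x ^ q} * (I ^ (j - q) * J ^ (r - j)) := by
            rw [← span_singleton_pow, ← mul_assoc, ← pow_add, Nat.add_sub_cancel' hqj]
        _ ≤ T * ((I + J) ^ (j - q) * (I + J) ^ (r - j)) := by gcongr
        _ ≤ T * (I + J) ^ (r - q) := by
            rw [← pow_add]
            exact mul_mono_right (pow_le_pow_right (by omega))
    · calc I ^ j * J ^ (r - j)
          ≤ I ^ j * (span ((· ^ q) '' ↑s) * J ^ (r - j - q)) := by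
            gcongr
            exact ih (by omega)
        _ ≤ (I + J) ^ j * (T * (I + J) ^ (r - j - q)) := by gcongr
        _ = T * (I + J) ^ (j + (r - j - q)) := by ring
        _ ≤ T * (I + J) ^ (r - q) := mul_mono_right (pow_le_pow_right (by omega))

section Skoda

variable {R : Type*} [CommRing R] {a : Ideal R} {m : ℕ} {g : Fin m → R}

theorem pow_le_bracketPow_mul_pow (ha : a = span (Set.range g)) {q r : ℕ}
    (hr : m * (q - 1) < r) : a ^ r ≤ bracketPow a q * a ^ (r - q) := by
  classical
  have hs : ((Finset.univ.image g : Finset R) : Set R) = Set.range g := by simp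
  have hcard : (Finset.univ.image g).card ≤ m :=
    Finset.card_image_le.trans (Finset.card_fin m).le
  have := span_pow_le_span_image_pow_mul (Finset.univ.image g) q
    (lt_of_le_of_lt (Nat.mul_le_mul_right _ hcard) hr)
  rw [hs, ← ha] at this
  refine this.trans (mul_mono_left (span_mono (Set.image_mono ?_)))
  exact ha ▸ subset_span

variable {p : ℕ} [ExpChar R p]

theorem frobRoot_pow_eq_mul {e : ℕ} (B : (iterateFrobenius R p e).FiniteDualBasis)
    (ha : a = span (Set.range g)) {r : ℕ} (hqr : p ^ e ≤ r) (hr : m * (p ^ e - 1) < r) :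
    frobRoot (a ^ r) (p ^ e) = a * frobRoot (a ^ (r - p ^ e)) (p ^ e) := by
  have gc := gc_frobRoot_bracketPow B
  refine le_antisymm ?_ (mul_le.2 fun x hx y hy => ?_)
  · refine gc.l_le ((pow_le_bracketPow_mul_pow ha hr).trans ?_)
    rw [bracketPow_mul]
    exact mul_mono_right (gc.le_u_l _)
  · set L := frobRoot (a ^ r) (p ^ e)
    have hcolon : frobRoot (a ^ (r - p ^ e)) (p ^ e) ≤ L.colon {x} := by
      refine gc.l_le fun z hz => B.mem_map_colon_of_map_mul_mem ?_
      rw [iterateFrobenius_def, ← bracketPow_eq_map]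
      refine gc.le_u_l _ ?_
      rw [← Nat.add_sub_cancel' hqr, pow_add]
      exact mul_mem_mul (pow_mem_pow hx _) hz
    simpa [Submodule.mem_colon_singleton, mul_comm] using hcolon hy

theorem testIdeal_eq_mul_testIdeal_sub_one
    (hF : ∀ e, Nonempty (iterateFrobenius R p e).FiniteDualBasis)
    (ha : a = span (Set.range g)) {d : ℝ} (hmd : m ≤ d) (hd : 1 ≤ d) :
    testIdeal p a d = a * testIdeal p a (d - 1) := by
  simp only [testIdeal, Submodule.mul_iSup]
  refine iSup_congr fun e => ?_
  obtain ⟨B⟩ := hF (e + 1)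
  set q := p ^ (e + 1)
  have hq1 : 1 ≤ q := Nat.one_le_pow _ _ (expChar_pos R p)
  rw [show (p : ℝ) ^ (e + 1) = q by simp [q]]
  set r := ⌈d * q⌉₊
  have hqr : q ≤ r := by
    exact_mod_cast (show (q : ℝ) ≤ d * q by nlinarith).trans (Nat.le_ceil _)
  have hmr : m * q ≤ r := by
    exact_mod_cast (show ((m * q : ℕ) : ℝ) ≤ d * q by push_cast; gcongr).trans (Nat.le_ceil _)
  have hr : m * (q - 1) < r := by
    rcases Nat.eq_zero_or_pos m with rfl | hm
    · omega
    · exact (Nat.mul_lt_mul_of_pos_left (by omega) hm).trans_le hmr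
  have hceil : ⌈(d - 1) * q⌉₊ = r - q := by
    have := Nat.ceil_add_natCast (show 0 ≤ (d - 1) * q by nlinarith) q
    rw [show (d - 1) * q + q = d * q by ring] at this
    omega
  rw [hceil, frobRoot_pow_eq_mul B ha hqr hr]

end Skoda

section JumpingExponents

variable {R : Type*} [CommRing R] {p : ℕ} [ExpChar R p] {a : Ideal R} {α : ℝ}

theorem nonempty_finiteDualBasis_iterateFrobenius [IsNoetherianRing R]
    (hfin : (frobenius R p).Finite) (hflat : (frobenius R p).Flat) (e : ℕ) :
    Nonempty (iterateFrobenius R p e).FiniteDualBasis := by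
  obtain ⟨B⟩ := RingHom.FiniteDualBasis.nonempty_of_finite_of_flat hfin hflat
  induction e with
  | zero => exact iterateFrobenius_zero R p ▸ ⟨.id⟩
  | succ e ih =>
    obtain ⟨A⟩ := ih
    exact (iterateFrobenius_add R p e 1).symm ▸ iterateFrobenius_one R p ▸ ⟨A.comp B⟩

theorem testIdeal_bot {c : ℝ} (hc : 0 < c) : testIdeal p (⊥ : Ideal R) c = ⊥ := by
  have hp : (0 : ℝ) < p := by exact_mod_cast expChar_pos R p
  refine le_bot_iff.1 (iSup_le fun e => ?_)
  rw [← zero_eq_bot, zero_pow (Nat.ceil_pos.2 (by positivity)).ne', zero_eq_bot, frobRoot_bot]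

theorem not_isFJumpingExponent_bot : ¬ IsFJumpingExponent p (⊥ : Ideal R) α := by
  rintro ⟨hα, h⟩
  exact h (α / 2) (by positivity) (by linarith) <| by
    rw [testIdeal_bot (by positivity), testIdeal_bot hα]

theorem IsFJumpingExponent.natCast_mul
    (hF : ∀ e, Nonempty (iterateFrobenius R p e).FiniteDualBasis)
    (h : IsFJumpingExponent p a α) : IsFJumpingExponent p a (p * α) := by
  have hp : (0 : ℝ) < p := by exact_mod_cast expChar_pos R p
  refine ⟨mul_pos hp h.1, fun c hc hcα heq => h.2 (c / p) (by positivity) ?_ ?_⟩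
  · rwa [div_lt_iff₀' hp]
  · rw [← frobRoot_testIdeal_natCast_mul hF a (c / p),
      ← frobRoot_testIdeal_natCast_mul hF a α,
      mul_div_cancel₀ _ hp.ne', heq]

theorem IsFJumpingExponent.sub_one
    (hF : ∀ e, Nonempty (iterateFrobenius R p e).FiniteDualBasis) {m : ℕ} {g : Fin m → R}
    (ha : a = span (Set.range g)) (hmα : m < α) (h : IsFJumpingExponent p a α) :
    IsFJumpingExponent p a (α - 1) := by
  have h1α : 1 < α := by
    rcases Nat.eq_zero_or_pos m with rfl | hm
    · simp only [Set.range_eq_empty, span_empty] at ha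
      exact absurd (ha ▸ h) not_isFJumpingExponent_bot
    · exact lt_of_le_of_lt (by exact_mod_cast hm) hmα
  refine ⟨by linarith, fun c hc hcα heq => ?_⟩
  -- Skoda's theorem needs exponents `≥ m`, so first move `c` up to `max c (m - 1)`.
  set c' := max c (m - 1)
  have hcc' : c ≤ c' := le_max_left _ _
  have hmc' : (m : ℝ) - 1 ≤ c' := le_max_right _ _
  have hc'α : c' < α - 1 := max_lt hcα (by linarith)
  have hc' : testIdeal p a c' = testIdeal p a (α - 1) :=
    le_antisymm (heq ▸ testIdeal_antitone a hcc') (testIdeal_antitone a hc'α.le)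
  refine h.2 (c' + 1) (by linarith) (by linarith) ?_
  rw [testIdeal_eq_mul_testIdeal_sub_one hF ha (by linarith) (by linarith),
    testIdeal_eq_mul_testIdeal_sub_one hF ha hmα.le h1α.le, add_sub_cancel_right, hc']

end JumpingExponents

/-- `pα` is an F-jumping exponent if `α` is, and `α - 1` is one
if `α > m` is one and `a` is generated by `m` elements. -/
theorem stmt16_jumping_exponent_shifts
    {R : Type*} [CommRing R] [IsNoetherianRing R] (p : ℕ) [Fact p.Prime] [CharP R p]
    (hfin : (frobenius R p).Finite) (hflat : (frobenius R p).Flat)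
    (a : Ideal R) :
    (∀ α : ℝ, 0 < α → IsFJumpingExponent p a α → IsFJumpingExponent p a ((p : ℝ) * α)) ∧
    (∀ (m : ℕ) (g : Fin m → R), a = Ideal.span (Set.range g) →
      ∀ α : ℝ, (m : ℝ) < α → IsFJumpingExponent p a α →
        IsFJumpingExponent p a (α - 1)) := by
  have hF := nonempty_finiteDualBasis_iterateFrobenius hfin hflat
  exact ⟨fun _ _ h => h.natCast_mul hF, fun _ _ ha _ hmα h => h.sub_one hF ha hmα⟩
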